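/- arXiv:0906.3645 — 3 statements merged into one kernel-verified Lean document; each statement's English description precedes it below -/
import Mathlib

section
/- Let G be a group of nilpotency class at most 2 and let n be a natural number. Then the commutator of x and y in the group (G, ∘ₙ) equals ⁅x,y⁆^{2n+1}: for all x, y in G, ((x⁻¹ ∘ₙ y⁻¹) ∘ₙ x) ∘ₙ y = ⁅x,y⁆^{2n+1}. -/
/-!
In a group of class at most 2 every commutator is central, so the commutator is
bimultiplicative and the central factors `[x,y]^n` produced by `∘ₙ` can be pulled out of
every later commutator. Tracking them: `x⁻¹ ∘ₙ y⁻¹ = c^n x⁻¹y⁻¹` with `c = [x,y]`, then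
`[x⁻¹y⁻¹, x] = c` and `[x⁻¹y⁻¹x, y] = 1`, so the result is `c^n c^n x⁻¹y⁻¹xy = c^(2n+1)`.
-/

/-- The commutator `[x,y] = x⁻¹y⁻¹xy` as used in the paper. -/
def pcomm {G : Type*} [Group G] (x y : G) : G := x⁻¹ * y⁻¹ * x * y

/-- The operation `x ∘ₙ y := [x,y]^n x y` of the paper. -/
def opn {G : Type*} [Group G] (n : ℕ) (x y : G) : G := (pcomm x y) ^ n * x * y

section Group

variable {G : Type*} [Group G]

theorem pcomm_eq_one_iff {a b : G} : pcomm a b = 1 ↔ Commute a b := by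
  have h : pcomm a b = (b * a)⁻¹ * (a * b) := by
    simp only [pcomm]
    group
  rw [h, inv_mul_eq_one, commute_iff_eq, eq_comm]

@[simp]
theorem pcomm_self (a : G) : pcomm a a = 1 :=
  pcomm_eq_one_iff.2 (Commute.refl a)

theorem inv_pcomm (a b : G) : (pcomm a b)⁻¹ = pcomm b a := by
  simp only [pcomm]
  group

theorem pcomm_mul_left_of_commute {z b : G} (h : Commute z b) (a : G) :
    pcomm (z * a) b = pcomm a b := by
  have hb : z⁻¹ * b⁻¹ * z = b⁻¹ := by
    rw [mul_assoc, ← h.inv_right.eq, inv_mul_cancel_left]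
  calc pcomm (z * a) b = a⁻¹ * (z⁻¹ * b⁻¹ * z) * a * b := by simp only [pcomm]; group
    _ = pcomm a b := by rw [hb]; rfl

theorem opn_eq (n : ℕ) (a b : G) : opn n a b = pcomm a b ^ n * (a * b) :=
  mul_assoc _ _ _

end Group

section ClassTwo

variable {G : Type*} [Group G] (hG : ∀ x y z : G, pcomm (pcomm x y) z = 1)
include hG

theorem commute_pcomm (a b z : G) : Commute (pcomm a b) z :=
  pcomm_eq_one_iff.1 (hG a b z)

theorem pcomm_mul_left (a b c : G) : pcomm (a * b) c = pcomm a c * pcomm b c := by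
  have h : pcomm (a * b) c = b⁻¹ * pcomm a c * b * pcomm b c := by
    simp only [pcomm]
    group
  rw [h, mul_assoc b⁻¹, (commute_pcomm hG a c b).eq, inv_mul_cancel_left]

theorem pcomm_inv_left (a b : G) : pcomm a⁻¹ b = (pcomm a b)⁻¹ := by
  rw [eq_inv_iff_mul_eq_one, ← pcomm_mul_left hG, inv_mul_cancel, pcomm_eq_one_iff]
  exact Commute.one_left b

theorem pcomm_inv_right (a b : G) : pcomm a b⁻¹ = (pcomm a b)⁻¹ := by
  rw [← inv_pcomm, pcomm_inv_left hG, inv_pcomm, inv_pcomm]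

end ClassTwo

/-- In a group of nilpotency class at most 2, the `∘ₙ`-commutator of `x`
and `y` equals `[x,y]^(2n+1)`. -/
theorem stmt_3 {G : Type*} [Group G]
    (hG : ∀ x y z : G, pcomm (pcomm x y) z = 1) (n : ℕ) (x y : G) :
    opn n (opn n (opn n x⁻¹ y⁻¹) x) y = (pcomm x y) ^ (2 * n + 1) := by
  set c := pcomm x y
  have hcn (z : G) : Commute (c ^ n) z := (commute_pcomm hG x y z).pow_left n
  have h₁ : pcomm x⁻¹ y⁻¹ = c := by
    rw [pcomm_inv_left hG, pcomm_inv_right hG, inv_inv]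
  have h₂ : pcomm (x⁻¹ * y⁻¹) x = c := by
    rw [pcomm_mul_left hG, pcomm_inv_left hG, pcomm_inv_left hG, pcomm_self, inv_one, one_mul,
      inv_pcomm]
  have h₃ : pcomm (x⁻¹ * y⁻¹ * x) y = 1 := by
    rw [pcomm_mul_left hG, pcomm_mul_left hG, pcomm_inv_left hG, pcomm_inv_left hG, pcomm_self,
      inv_one, mul_one, inv_mul_cancel]
  calc opn n (opn n (opn n x⁻¹ y⁻¹) x) y
      = opn n (opn n (c ^ n * (x⁻¹ * y⁻¹)) x) y := by rw [opn_eq n x⁻¹, h₁]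
    _ = opn n (c ^ n * (c ^ n * (x⁻¹ * y⁻¹ * x))) y := by
        rw [opn_eq n _ x, pcomm_mul_left_of_commute (hcn x), h₂]
        group
    _ = c ^ n * (c ^ n * (x⁻¹ * y⁻¹ * x * y)) := by
        rw [opn_eq n _ y, pcomm_mul_left_of_commute (hcn y), pcomm_mul_left_of_commute (hcn y), h₃]
        group
    _ = c ^ (2 * n + 1) := by
        rw [← mul_assoc, ← pow_add, ← two_mul, pow_succ]
        rfl
end

section
/- Let G be a group of nilpotency class at most 2 and let n be a natural number. Then every ∘ₙ-commutator is central in (G, ∘ₙ): for all x, y, z in G, ⁅x,y⁆^{2n+1} ∘ₙ z = z ∘ₙ ⁅x,y⁆^{2n+1}. (Hence the group (G, ∘ₙ) has nilpotency class at most 2.) -/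
lemma pcomm_eq_one_of_commute {G : Type*} [Group G] {a b : G} (h : Commute a b) :
    pcomm a b = 1 := by
  simp only [pcomm]
  rw [h.inv_inv.eq]
  group

/-- In a group of nilpotency class at most 2, every `∘ₙ`-commutator
`[x,y]^(2n+1)` is central in `(G, ∘ₙ)`. -/
theorem stmt_4 {G : Type*} [Group G]
    (hG : ∀ x y z : G, pcomm (pcomm x y) z = 1) (n : ℕ) (x y z : G) :
    opn n ((pcomm x y) ^ (2 * n + 1)) z = opn n z ((pcomm x y) ^ (2 * n + 1)) := by
  have hw : Commute (pcomm x y) z := by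
    have h := hG x y z
    rw [pcomm] at h
    have : (pcomm x y)⁻¹ * z⁻¹ * (pcomm x y) * z = 1 := h
    have h2 : (pcomm x y) * z = z * (pcomm x y) := by
      have := congrArg (fun t => z * (pcomm x y) * t) this
      simpa [mul_assoc] using this
    exact h2
  have hc : Commute ((pcomm x y) ^ (2 * n + 1)) z := hw.pow_left _
  rw [opn, opn, pcomm_eq_one_of_commute hc, pcomm_eq_one_of_commute hc.symm]
  simpa using hc.eq
end

section
/- Let p be an odd prime and let G be a finite group of order p^k and nilpotency class 2 whose commutator subgroup has exponent p^t. Then the sets Z_i = {x ∈ G | x^{p^i} ∈ Z(G)}, for 0 ≤ i ≤ t, form a strictly increasing chain Z(G) = Z_0 ⊊ Z_1 ⊊ ⋯ ⊊ Z_t = G; in particular each Z_i is a subgroup of G and x^{p^t} ∈ Z(G) for every x ∈ G. -/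
/-! Put `Z_n = {x | x ^ n ∈ Z(G)}`. In class 2 the commutator is bimultiplicative with central
values, so `⁅x ^ n, y⁆ = ⁅x, y⁆ ^ n` and `x ∈ Z_n` iff `⁅x, y⁆ ^ n = 1` for all `y`. Hence each `Z_n`
is a subgroup, and `Z_n = G` exactly when the exponent of `⁅G, G⁆` divides `n`, because `⁅G, G⁆` is
generated by commutators and is abelian. Since `x ∈ Z_{p^(i+1)}` iff `x ^ p ∈ Z_{p^i}`, an equality
`Z_{p^i} = Z_{p^(i+1)}` propagates to `Z_{p^i} = Z_{p^t} = G`, forcing `p ^ t ∣ p ^ i`. -/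

open Subgroup
open scoped commutatorElement IsMulCommutative

def powCenter (G : Type*) [Group G] (n : ℕ) : Set G := {x | x ^ n ∈ center G}

section powCenter

variable {G : Type*} [Group G]

lemma mem_powCenter_mul {x : G} {m n : ℕ} : x ∈ powCenter G (m * n) ↔ x ^ m ∈ powCenter G n := by
  simp only [powCenter, Set.mem_ofPred_eq, pow_mul]

lemma powCenter_pow_subset_pow_succ (p i : ℕ) : powCenter G (p ^ i) ⊆ powCenter G (p ^ (i + 1)) :=
  fun x hx => by
    rw [pow_succ, mem_powCenter_mul]
    exact pow_mem (show x ^ p ^ i ∈ center G from hx) p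

lemma powCenter_pow_subset_of_succ_subset {p i : ℕ}
    (h : powCenter G (p ^ (i + 1)) ⊆ powCenter G (p ^ i)) {j : ℕ} (hij : i ≤ j) :
    powCenter G (p ^ j) ⊆ powCenter G (p ^ i) := by
  induction j, hij using Nat.le_induction with
  | base => exact le_rfl
  | succ j _ ih =>
    intro x hx
    rw [pow_succ', mem_powCenter_mul] at hx
    exact h (by rw [pow_succ', mem_powCenter_mul]; exact ih hx)

end powCenter

section NilpotencyClassTwo

variable {G : Type*} [Group G] (hclass : commutator G ≤ center G)
include hclass

lemma commutatorElement_mem_center (x y : G) : ⁅x, y⁆ ∈ center G :=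
  hclass (commutator_mem_commutator (mem_top x) (mem_top y))

lemma commutatorElement_mul_left (a b y : G) : ⁅a * b, y⁆ = ⁅a, y⁆ * ⁅b, y⁆ := by
  rw [commutatorElement_mul_left_eq_conj_mul,
    mem_center_iff.mp (commutatorElement_mem_center hclass b y) a, mul_inv_cancel_right,
    mem_center_iff.mp (commutatorElement_mem_center hclass a y)]

lemma commutatorElement_pow_left (x y : G) (n : ℕ) : ⁅x ^ n, y⁆ = ⁅x, y⁆ ^ n := by
  induction n with
  | zero => simp
  | succ n ih => rw [pow_succ, commutatorElement_mul_left hclass, ih, ← pow_succ]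

lemma pow_mem_center_iff (x : G) (n : ℕ) : x ^ n ∈ center G ↔ ∀ y : G, ⁅x, y⁆ ^ n = 1 := by
  simp only [mem_center_iff, ← commutatorElement_pow_left hclass,
    commutatorElement_eq_one_iff_mul_comm, eq_comm]

def powCenterSubgroup (n : ℕ) : Subgroup G where
  carrier := powCenter G n
  one_mem' := by simp [powCenter, one_mem]
  inv_mem' {x} hx := by simpa [powCenter, inv_pow] using inv_mem (show x ^ n ∈ center G from hx)
  mul_mem' {a b} ha hb := by
    simp only [powCenter, Set.mem_ofPred_eq, pow_mem_center_iff hclass] at ha hb ⊢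
    intro y
    have hcomm : Commute ⁅a, y⁆ ⁅b, y⁆ :=
      (mem_center_iff.mp (commutatorElement_mem_center hclass a y) _).symm
    rw [commutatorElement_mul_left hclass, hcomm.mul_pow, ha y, hb y, one_mul]

lemma exponent_commutator_dvd_iff (n : ℕ) :
    Monoid.exponent (commutator G) ∣ n ↔ ∀ x : G, x ^ n ∈ center G := by
  constructor
  · rintro ⟨m, rfl⟩ x
    rw [pow_mul]
    refine pow_mem ((pow_mem_center_iff hclass x _).mpr fun y => ?_) m
    exact congrArg Subtype.val
      (Monoid.pow_exponent_eq_one (⟨⁅x, y⁆, commutator_mem_commutator (mem_top x) (mem_top y)⟩ :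
        commutator G))
  · intro h
    -- `⁅G, G⁆` lies in the abelian group `Z(G)`, where the `n`-torsion is a subgroup.
    have hle : commutator G ≤
        ((powMonoidHom n).ker : Subgroup (center G)).map (center G).subtype := by
      rw [commutator_eq_closure, closure_le]
      rintro _ ⟨x, y, rfl⟩
      refine ⟨⟨_, commutatorElement_mem_center hclass x y⟩, ?_, rfl⟩
      exact Subtype.ext ((pow_mem_center_iff hclass x n).mp (h x) y)
    refine Monoid.exponent_dvd_of_forall_pow_eq_one fun ⟨g, hg⟩ => ?_
    obtain ⟨c, hc, rfl⟩ := hle hg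
    exact Subtype.ext (by simpa using congrArg Subtype.val (MonoidHom.mem_ker.mp hc))

end NilpotencyClassTwo

theorem stmt_11_general {G : Type*} [Group G]
    (p t : ℕ) (hp : p.Prime)
    (hclass : commutator G ≤ Subgroup.center G)
    (hexp : Monoid.exponent ↥(commutator G) = p ^ t) :
    ({x : G | x ^ (p ^ 0) ∈ Subgroup.center G} = (Subgroup.center G : Set G)) ∧
    ({x : G | x ^ (p ^ t) ∈ Subgroup.center G} = Set.univ) ∧
    (∀ i ≤ t, ∃ H : Subgroup G, (H : Set G) = {x : G | x ^ (p ^ i) ∈ Subgroup.center G}) ∧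
    (∀ i < t, {x : G | x ^ (p ^ i) ∈ Subgroup.center G} ⊂
      {x : G | x ^ (p ^ (i + 1)) ∈ Subgroup.center G}) := by
  have hcentral : ∀ n, (∀ x : G, x ^ n ∈ center G) ↔ p ^ t ∣ n := fun n =>
    hexp ▸ (exponent_commutator_dvd_iff hclass n).symm
  refine ⟨by simp, Set.eq_univ_of_forall ((hcentral _).mpr dvd_rfl),
    fun i _ => ⟨powCenterSubgroup hclass (p ^ i), rfl⟩, fun i hi => ?_⟩
  refine (powCenter_pow_subset_pow_succ p i).ssubset_of_not_subset fun hstable => ?_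
  have hall : ∀ x : G, x ^ p ^ i ∈ center G := fun x =>
    powCenter_pow_subset_of_succ_subset hstable hi.le ((hcentral _).mpr dvd_rfl x)
  have := (Nat.pow_dvd_pow_iff_le_right hp.one_lt).mp ((hcentral _).mp hall)
  omega

/-- Let `p` be an odd prime and `G` a finite group of order `p^k` and
nilpotency class 2 whose commutator subgroup has exponent `p^t`. Then the sets
`Z i = {x | x^(p^i) ∈ Z(G)}` form a strictly increasing chain
`Z(G) = Z 0 ⊊ Z 1 ⊊ ⋯ ⊊ Z t = G`, and each `Z i` is (the carrier of) a subgroup of `G`. -/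
theorem stmt_11 {G : Type*} [Group G] [Finite G]
    (p k t : ℕ) (hp : p.Prime) (hodd : Odd p)
    (hcard : Nat.card G = p ^ k)
    (hclass : commutator G ≤ Subgroup.center G)
    (hnonab : commutator G ≠ ⊥)
    (hexp : Monoid.exponent ↥(commutator G) = p ^ t) :
    ({x : G | x ^ (p ^ 0) ∈ Subgroup.center G} = (Subgroup.center G : Set G)) ∧
    ({x : G | x ^ (p ^ t) ∈ Subgroup.center G} = Set.univ) ∧
    (∀ i ≤ t, ∃ H : Subgroup G, (H : Set G) = {x : G | x ^ (p ^ i) ∈ Subgroup.center G}) ∧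
    (∀ i < t, {x : G | x ^ (p ^ i) ∈ Subgroup.center G} ⊂
      {x : G | x ^ (p ^ (i + 1)) ∈ Subgroup.center G}) :=
  stmt_11_general p t hp hclass hexp
end
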